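/- arXiv:2603.02055 — 6 statements merged into one kernel-verified Lean document; each statement's English description precedes it below -/
import Mathlib

section
/- Fix real numbers p ∈ [0,1], μ0, r, S_P and strictly positive reals rE, rP. The function L(S_E) = (1−p)·(r − (μ0 + rE·S_E)/(1+rE))² + p·(r − (μ0 + rE·S_E + rP·S_P)/(1+rE+rP))² attains its unique global minimum at S_E* = r + (1/rE)·(r − μ0) + [rP·p·(1+rE)² / (rE·((1−p)·(1+rE+rP)² + p·(1+rE)²))]·(r − S_P). -/
set_option maxHeartbeats 1000000

/-- The expert loss attains its unique global minimum at `S_E*`. -/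
theorem stmt_1 (p μ0 r S_P rE rP : ℝ)
    (hp : p ∈ Set.Icc (0 : ℝ) 1) (hrE : 0 < rE) (hrP : 0 < rP) :
    ∀ S_E : ℝ,
      S_E ≠ r + (1 / rE) * (r - μ0) +
        rP * p * (1 + rE) ^ 2 /
          (rE * ((1 - p) * (1 + rE + rP) ^ 2 + p * (1 + rE) ^ 2)) * (r - S_P) →
      ((1 - p) * (r - (μ0 + rE * (r + (1 / rE) * (r - μ0) +
            rP * p * (1 + rE) ^ 2 /
              (rE * ((1 - p) * (1 + rE + rP) ^ 2 + p * (1 + rE) ^ 2)) * (r - S_P))) /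
            (1 + rE)) ^ 2 +
        p * (r - (μ0 + rE * (r + (1 / rE) * (r - μ0) +
            rP * p * (1 + rE) ^ 2 /
              (rE * ((1 - p) * (1 + rE + rP) ^ 2 + p * (1 + rE) ^ 2)) * (r - S_P)) +
            rP * S_P) / (1 + rE + rP)) ^ 2)
      <
      ((1 - p) * (r - (μ0 + rE * S_E) / (1 + rE)) ^ 2 +
        p * (r - (μ0 + rE * S_E + rP * S_P) / (1 + rE + rP)) ^ 2) := by
  obtain ⟨hp0, hp1⟩ := hp
  intro S_E hne
  have hE : (0:ℝ) < 1 + rE := by linarith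
  have hEP : (0:ℝ) < 1 + rE + rP := by linarith
  have hD : 0 < (1 - p) * (1 + rE + rP) ^ 2 + p * (1 + rE) ^ 2 := by
    rcases eq_or_lt_of_le hp0 with h | h
    · rw [← h]; nlinarith
    · nlinarith [mul_nonneg (by linarith : (0:ℝ) ≤ 1 - p) (sq_nonneg (1 + rE + rP)),
        mul_pos h (pow_pos hE 2)]
  set Sstar := r + (1 / rE) * (r - μ0) +
        rP * p * (1 + rE) ^ 2 /
          (rE * ((1 - p) * (1 + rE + rP) ^ 2 + p * (1 + rE) ^ 2)) * (r - S_P) with hS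
  set a1 := r - (μ0 + rE * Sstar) / (1 + rE) with ha1
  set a2 := r - (μ0 + rE * Sstar + rP * S_P) / (1 + rE + rP) with ha2
  have e1 : r - (μ0 + rE * S_E) / (1 + rE)
      = a1 - rE / (1 + rE) * (S_E - Sstar) := by
    rw [ha1]; field_simp; ring
  have e2 : r - (μ0 + rE * S_E + rP * S_P) / (1 + rE + rP)
      = a2 - rE / (1 + rE + rP) * (S_E - Sstar) := by
    rw [ha2]; field_simp; ring
  have hcross : (1 - p) * a1 * (rE / (1 + rE)) + p * a2 * (rE / (1 + rE + rP)) = 0 := by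
    rw [ha1, ha2, hS]
    field_simp
    ring
  have hA : 0 < (1 - p) * (rE / (1 + rE)) ^ 2 + p * (rE / (1 + rE + rP)) ^ 2 := by
    have h1 : 0 < (rE / (1 + rE)) ^ 2 := by positivity
    have h2 : 0 < (rE / (1 + rE + rP)) ^ 2 := by positivity
    rcases eq_or_lt_of_le hp0 with h | h
    · rw [← h]; simpa using h1
    · nlinarith [mul_nonneg (by linarith : (0:ℝ) ≤ 1 - p) h1.le, mul_pos h h2]
  have key : ((1 - p) * (r - (μ0 + rE * S_E) / (1 + rE)) ^ 2 +
        p * (r - (μ0 + rE * S_E + rP * S_P) / (1 + rE + rP)) ^ 2)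
      - ((1 - p) * a1 ^ 2 + p * a2 ^ 2)
      = ((1 - p) * (rE / (1 + rE)) ^ 2 + p * (rE / (1 + rE + rP)) ^ 2) *
          (S_E - Sstar) ^ 2 := by
    rw [e1, e2]
    linear_combination (-2 * (S_E - Sstar)) * hcross
  have hd : 0 < (S_E - Sstar) ^ 2 := by
    have : S_E - Sstar ≠ 0 := sub_ne_zero.mpr hne
    positivity
  nlinarith [mul_pos hA hd]
end

section
/- Fix real numbers p ∈ [0,1], μ0, r, S_P and strictly positive reals rE, rP. Let S_E* = r + (1/rE)·(r − μ0) + [rP·p·(1+rE)² / (rE·((1−p)·(1+rE+rP)² + p·(1+rE)²))]·(r − S_P). Then the minimized loss equals L(S_E*) = [p·(1−p)·rP² / ((1−p)·(1+rE+rP)² + p·(1+rE)²)]·(r − S_P)². In particular, the minimized loss does not depend on μ0. -/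
/-- The minimized loss at `S_E*` equals
`p(1-p)rP²(r-S_P)² / ((1-p)(1+rE+rP)² + p(1+rE)²)`; in particular it does not
depend on `μ0`. -/
theorem stmt_2 (p μ0 r S_P rE rP : ℝ)
    (hp : p ∈ Set.Icc (0 : ℝ) 1) (hrE : 0 < rE) (hrP : 0 < rP) :
    (1 - p) * (r - (μ0 + rE * (r + (1 / rE) * (r - μ0) +
          rP * p * (1 + rE) ^ 2 /
            (rE * ((1 - p) * (1 + rE + rP) ^ 2 + p * (1 + rE) ^ 2)) * (r - S_P))) /
          (1 + rE)) ^ 2 +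
      p * (r - (μ0 + rE * (r + (1 / rE) * (r - μ0) +
          rP * p * (1 + rE) ^ 2 /
            (rE * ((1 - p) * (1 + rE + rP) ^ 2 + p * (1 + rE) ^ 2)) * (r - S_P)) +
          rP * S_P) / (1 + rE + rP)) ^ 2
    =
    p * (1 - p) * rP ^ 2 /
      ((1 - p) * (1 + rE + rP) ^ 2 + p * (1 + rE) ^ 2) * (r - S_P) ^ 2 := by
  obtain ⟨hp0, hp1⟩ := hp
  have hE : (0:ℝ) < 1 + rE := by linarith
  have hEP : (0:ℝ) < 1 + rE + rP := by linarith
  have hD : (0:ℝ) < (1 - p) * (1 + rE + rP) ^ 2 + p * (1 + rE) ^ 2 := by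
    rcases lt_or_eq_of_le hp1 with h | h
    · have := mul_pos (by linarith : (0:ℝ) < 1 - p) (pow_pos hEP 2)
      nlinarith [mul_nonneg hp0 (pow_pos hE 2).le]
    · subst h; simpa using pow_pos hE 2
  have h1 : (1 + rE : ℝ) ≠ 0 := hE.ne'
  have h2 : (1 + rE + rP : ℝ) ≠ 0 := hEP.ne'
  have h3 : ((1 - p) * (1 + rE + rP) ^ 2 + p * (1 + rE) ^ 2 : ℝ) ≠ 0 := hD.ne'
  field_simp
  ring
end

section
/- Fix p ∈ (0,1) and define g(t) = p·t / ((1−p)·(1+t)² + p) for t > 0. Then g is strictly increasing on (0, 1/√(1−p)) and strictly decreasing on (1/√(1−p), ∞); in particular, t* = 1/√(1−p) is the unique global maximizer of g on (0, ∞). -/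
private lemma denom_pos (p t : ℝ) (hp0 : 0 < p) (hp1 : p < 1) (ht : 0 < t) :
    0 < (1 - p) * (1 + t) ^ 2 + p := by nlinarith

private lemma key (p a b : ℝ) (hp0 : 0 < p) (hp1 : p < 1) (ha : 0 < a) (hb : 0 < b)
    (h : a < b) (hab : (1 - p) * (a * b) < 1) :
    p * a / ((1 - p) * (1 + a) ^ 2 + p) < p * b / ((1 - p) * (1 + b) ^ 2 + p) := by
  rw [div_lt_div_iff₀ (denom_pos p a hp0 hp1 ha) (denom_pos p b hp0 hp1 hb)]
  nlinarith [mul_pos hp0 (mul_pos (sub_pos.mpr h) (sub_pos.mpr hab))]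

private lemma key' (p a b : ℝ) (hp0 : 0 < p) (hp1 : p < 1) (ha : 0 < a) (hb : 0 < b)
    (h : a < b) (hab : 1 < (1 - p) * (a * b)) :
    p * b / ((1 - p) * (1 + b) ^ 2 + p) < p * a / ((1 - p) * (1 + a) ^ 2 + p) := by
  rw [div_lt_div_iff₀ (denom_pos p b hp0 hp1 hb) (denom_pos p a hp0 hp1 ha)]
  nlinarith [mul_pos hp0 (mul_pos (sub_pos.mpr h) (sub_pos.mpr hab))]

/-- `g(t) = pt/((1-p)(1+t)²+p)` is strictly increasing on
`(0, 1/√(1-p))`, strictly decreasing on `(1/√(1-p), ∞)`, and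
`t* = 1/√(1-p)` is the unique global maximizer on `(0, ∞)`. -/
theorem stmt_7 (p : ℝ) (hp : p ∈ Set.Ioo (0 : ℝ) 1) :
    StrictMonoOn (fun t : ℝ => p * t / ((1 - p) * (1 + t) ^ 2 + p))
      (Set.Ioo 0 (1 / Real.sqrt (1 - p))) ∧
    StrictAntiOn (fun t : ℝ => p * t / ((1 - p) * (1 + t) ^ 2 + p))
      (Set.Ioi (1 / Real.sqrt (1 - p))) ∧
    ∀ t ∈ Set.Ioi (0 : ℝ), t ≠ 1 / Real.sqrt (1 - p) →
      p * t / ((1 - p) * (1 + t) ^ 2 + p) <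
        p * (1 / Real.sqrt (1 - p)) /
          ((1 - p) * (1 + 1 / Real.sqrt (1 - p)) ^ 2 + p) := by
  obtain ⟨hp0, hp1⟩ := hp
  have hq : (0:ℝ) < 1 - p := by linarith
  set s := Real.sqrt (1 - p) with hs
  have hs0 : 0 < s := Real.sqrt_pos.mpr hq
  have hs2 : s ^ 2 = 1 - p := Real.sq_sqrt hq.le
  have hts : (0:ℝ) < 1 / s := by positivity
  have hcrit : (1 - p) * ((1 / s) * (1 / s)) = 1 := by
    field_simp
    nlinarith
  refine ⟨?_, ?_, ?_⟩
  · intro a ha b hb hab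
    exact key p a b hp0 hp1 ha.1 hb.1 hab (by
      have h1 : a * b < (1 / s) * (1 / s) :=
        mul_lt_mul'' ha.2 hb.2 ha.1.le hb.1.le
      nlinarith)
  · intro a ha b hb hab
    have ha' : 0 < a := lt_trans hts ha
    have hb' : 0 < b := lt_trans hts hb
    exact key' p a b hp0 hp1 ha' hb' hab (by
      have h1 : (1 / s) * (1 / s) < a * b :=
        mul_lt_mul'' (Set.mem_Ioi.mp ha) hb hts.le hts.le
      nlinarith [mul_lt_mul_of_pos_left h1 hq])
  · intro t ht hne
    rcases lt_or_gt_of_ne hne with h | h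
    · exact key p t (1 / s) hp0 hp1 ht hts h (by
        have h1 : t * (1 / s) < (1 / s) * (1 / s) :=
          mul_lt_mul_of_pos_right h hts
        nlinarith)
    · exact key' p (1 / s) t hp0 hp1 hts ht h (by
        have h1 : (1 / s) * (1 / s) < (1 / s) * t :=
          mul_lt_mul_of_pos_left h hts
        nlinarith [mul_lt_mul_of_pos_left h1 hq])
end

section
/- Fix strictly positive reals rE, rP and reals r, S_P with r ≠ S_P. Define L*(p) = [p·(1−p)·rP² / ((1−p)·(1+rE+rP)² + p·(1+rE)²)]·(r − S_P)² for p ∈ (0,1). Then L* is strictly increasing on (0, p*) and strictly decreasing on (p*, 1), where p* = (1+rE+rP)/(2·(1+rE)+rP); in particular, p* is the unique maximizer of L* on (0,1). -/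
private lemma aux_cmp (A B c e p q : ℝ) (hB : 0 < B) (hAB : B < A)
    (hc : 0 < c) (he : 0 < e)
    (hp0 : 0 < p) (hp1 : p < 1) (hq0 : 0 < q) (hq1 : q < 1)
    (hkey : p * (1 - p) * ((1 - q) * A ^ 2 + q * B ^ 2) <
      q * (1 - q) * ((1 - p) * A ^ 2 + p * B ^ 2)) :
    p * (1 - p) * c / ((1 - p) * A ^ 2 + p * B ^ 2) * e <
      q * (1 - q) * c / ((1 - q) * A ^ 2 + q * B ^ 2) * e := by
  have hA : 0 < A := hB.trans hAB
  have hDp : 0 < (1 - p) * A ^ 2 + p * B ^ 2 := by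
    have h1 : 0 < (1 - p) * A ^ 2 := mul_pos (by linarith) (by positivity)
    have h2 : 0 < p * B ^ 2 := mul_pos hp0 (by positivity)
    linarith
  have hDq : 0 < (1 - q) * A ^ 2 + q * B ^ 2 := by
    have h1 : 0 < (1 - q) * A ^ 2 := mul_pos (by linarith) (by positivity)
    have h2 : 0 < q * B ^ 2 := mul_pos hq0 (by positivity)
    linarith
  rw [div_mul_eq_mul_div, div_mul_eq_mul_div, div_lt_div_iff₀ hDp hDq]
  nlinarith [mul_lt_mul_of_pos_right hkey (mul_pos hc he)]

set_option maxHeartbeats 1000000 in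
/-- The equilibrium loss is strictly increasing on `(0, p*)` and
strictly decreasing on `(p*, 1)`, where `p* = (1+rE+rP)/(2(1+rE)+rP)`; in
particular `p*` is the unique maximizer on `(0,1)`. -/
theorem stmt_11 (rE rP r S_P : ℝ) (hrE : 0 < rE) (hrP : 0 < rP)
    (hne : r ≠ S_P) :
    StrictMonoOn
      (fun p : ℝ => p * (1 - p) * rP ^ 2 /
        ((1 - p) * (1 + rE + rP) ^ 2 + p * (1 + rE) ^ 2) * (r - S_P) ^ 2)
      (Set.Ioo 0 ((1 + rE + rP) / (2 * (1 + rE) + rP))) ∧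
    StrictAntiOn
      (fun p : ℝ => p * (1 - p) * rP ^ 2 /
        ((1 - p) * (1 + rE + rP) ^ 2 + p * (1 + rE) ^ 2) * (r - S_P) ^ 2)
      (Set.Ioo ((1 + rE + rP) / (2 * (1 + rE) + rP)) 1) ∧
    ∀ p ∈ Set.Ioo (0 : ℝ) 1, p ≠ (1 + rE + rP) / (2 * (1 + rE) + rP) →
      p * (1 - p) * rP ^ 2 /
          ((1 - p) * (1 + rE + rP) ^ 2 + p * (1 + rE) ^ 2) * (r - S_P) ^ 2 <
        ((1 + rE + rP) / (2 * (1 + rE) + rP)) *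
            (1 - (1 + rE + rP) / (2 * (1 + rE) + rP)) * rP ^ 2 /
          ((1 - (1 + rE + rP) / (2 * (1 + rE) + rP)) * (1 + rE + rP) ^ 2 +
            ((1 + rE + rP) / (2 * (1 + rE) + rP)) * (1 + rE) ^ 2) *
          (r - S_P) ^ 2 := by
  set A : ℝ := 1 + rE + rP with hA_def
  set B : ℝ := 1 + rE with hB_def
  have hB : 0 < B := by simp [hB_def]; linarith
  have hAB : B < A := by simp [hA_def, hB_def]; linarith
  have hA : 0 < A := hB.trans hAB
  have hc : 0 < rP ^ 2 := by positivity
  have he : 0 < (r - S_P) ^ 2 := by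
    have : r - S_P ≠ 0 := sub_ne_zero.mpr hne
    positivity
  have hden : 0 < 2 * (1 + rE) + rP := by linarith
  set ps : ℝ := A / (2 * (1 + rE) + rP) with hps_def
  have hABsum : 2 * (1 + rE) + rP = A + B := by simp [hA_def, hB_def]; ring
  have hps_eq : ps * (A + B) = A := by
    rw [hps_def, hABsum, div_mul_cancel₀]
    linarith
  have hps0 : 0 < ps := div_pos hA hden
  have hps1 : ps < 1 := by
    rw [hps_def, div_lt_one hden]; rw [hABsum]; linarith
  -- at p = ps : A * (1 - ps) = B * ps
  have hps_bal : A * (1 - ps) = B * ps := by nlinarith [hps_eq]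
  refine ⟨?_, ?_, ?_⟩
  · -- strict mono on (0, ps)
    rintro p ⟨hp0, hp2⟩ q ⟨hq0, hq2⟩ hpq
    have hp1 : p < 1 := hp2.trans hps1
    have hq1 : q < 1 := hq2.trans hps1
    -- B * p < A * (1 - p)
    have hbp : B * p < A * (1 - p) := by
      have := (mul_lt_mul_of_pos_right hp2 (by rw [hABsum] at hden; exact hden : (0:ℝ) < A + B))
      rw [hps_eq] at this
      linarith
    have hbq : B * q < A * (1 - q) := by
      have := (mul_lt_mul_of_pos_right hq2 (by rw [hABsum] at hden; exact hden : (0:ℝ) < A + B))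
      rw [hps_eq] at this
      linarith
    apply aux_cmp A B (rP ^ 2) ((r - S_P) ^ 2) p q hB hAB hc he hp0 hp1 hq0 hq1
    have h1 : 0 ≤ B * p := mul_nonneg hB.le hp0.le
    have h2 : 0 ≤ B * q := mul_nonneg hB.le hq0.le
    have hprod := mul_lt_mul'' hbp hbq h1 h2
    have hbr : 0 < (1 - p) * (1 - q) * A ^ 2 - p * q * B ^ 2 := by nlinarith [hprod]
    have hkey2 : q * (1 - q) * ((1 - p) * A ^ 2 + p * B ^ 2) -
        p * (1 - p) * ((1 - q) * A ^ 2 + q * B ^ 2) =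
        (q - p) * ((1 - p) * (1 - q) * A ^ 2 - p * q * B ^ 2) := by ring
    have hpos := mul_pos (sub_pos.mpr hpq) hbr
    linarith [hkey2, hpos]
  · -- strict anti on (ps, 1)
    rintro p ⟨hp2, hp1⟩ q ⟨hq2, hq1⟩ hpq
    have hp0 : 0 < p := hps0.trans hp2
    have hq0 : 0 < q := hps0.trans hq2
    have hbp : A * (1 - p) < B * p := by
      have := (mul_lt_mul_of_pos_right hp2 (by rw [hABsum] at hden; exact hden : (0:ℝ) < A + B))
      rw [hps_eq] at this
      linarith
    have hbq : A * (1 - q) < B * q := by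
      have := (mul_lt_mul_of_pos_right hq2 (by rw [hABsum] at hden; exact hden : (0:ℝ) < A + B))
      rw [hps_eq] at this
      linarith
    apply aux_cmp A B (rP ^ 2) ((r - S_P) ^ 2) q p hB hAB hc he hq0 hq1 hp0 hp1
    have h1 : 0 ≤ A * (1 - p) := mul_nonneg hA.le (by linarith)
    have h2 : 0 ≤ A * (1 - q) := mul_nonneg hA.le (by linarith)
    have hprod := mul_lt_mul'' hbp hbq h1 h2
    have hbr : (1 - p) * (1 - q) * A ^ 2 - p * q * B ^ 2 < 0 := by nlinarith [hprod]
    have hkey2 : p * (1 - p) * ((1 - q) * A ^ 2 + q * B ^ 2) -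
        q * (1 - q) * ((1 - p) * A ^ 2 + p * B ^ 2) =
        (p - q) * ((1 - p) * (1 - q) * A ^ 2 - p * q * B ^ 2) := by ring
    have hpos := mul_pos_of_neg_of_neg (sub_neg.mpr hpq) hbr
    linarith [hkey2, hpos]
  · -- unique maximizer
    rintro p ⟨hp0, hp1⟩ hpne
    apply aux_cmp A B (rP ^ 2) ((r - S_P) ^ 2) p ps hB hAB hc he hp0 hp1 hps0 hps1
    have hid : (1 - p) * (1 - ps) * A ^ 2 - p * ps * B ^ 2 =
        B * ps * (A * (1 - p) - B * p) := by
      linear_combination (1 - p) * A * hps_bal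
    have hkey : ps * (1 - ps) * ((1 - p) * A ^ 2 + p * B ^ 2) -
        p * (1 - p) * ((1 - ps) * A ^ 2 + ps * B ^ 2) =
        (ps - p) * ((1 - p) * (1 - ps) * A ^ 2 - p * ps * B ^ 2) := by ring
    rcases lt_or_gt_of_ne hpne with hlt | hgt
    · have hbp : B * p < A * (1 - p) := by
        have h := (mul_lt_mul_of_pos_right hlt
          (by rw [hABsum] at hden; exact hden : (0:ℝ) < A + B))
        rw [hps_eq] at h
        linarith
      have hpos : 0 < (ps - p) * ((1 - p) * (1 - ps) * A ^ 2 - p * ps * B ^ 2) := by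
        rw [hid]
        exact mul_pos (sub_pos.mpr hlt)
          (mul_pos (mul_pos hB hps0) (sub_pos.mpr hbp))
      linarith [hkey, hpos]
    · have hbp : A * (1 - p) < B * p := by
        have h := (mul_lt_mul_of_pos_right hgt
          (by rw [hABsum] at hden; exact hden : (0:ℝ) < A + B))
        rw [hps_eq] at h
        linarith
      have hpos : 0 < (ps - p) * ((1 - p) * (1 - ps) * A ^ 2 - p * ps * B ^ 2) := by
        rw [hid]
        exact mul_pos_of_neg_of_neg (sub_neg.mpr hgt)
          (mul_neg_of_pos_of_neg (mul_pos hB hps0) (sub_neg.mpr hbp))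
      linarith [hkey, hpos]
end

section
/- Fix p ∈ [0,1], rE > 0, t > 0, and reals r, S_P, and set rP = t·(1+rE). Then the equilibrium loss satisfies the identity L*(p, rE, rP) = [t² / ((1−p)·(1+t)² + p)] · p·(1−p)·(r − S_P)². In particular, L* depends on (rE, rP) only through the relative trust ratio t = rP/(1+rE): any two pairs (rE, rP) and (rE', rP') with rP/(1+rE) = rP'/(1+rE') yield the same equilibrium loss. -/
/-!
Substituting `rP = t (1 + rE)`, the factor `(1 + rE)²` comes out of both the numerator and the
denominator of the equilibrium loss and cancels, leaving an expression in `t` alone. Two pairs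
with the same trust ratio are both of this form with the same `t`.
-/

noncomputable def equilibriumLoss (p rE rP r S_P : ℝ) : ℝ :=
  p * (1 - p) * rP ^ 2 / ((1 - p) * (1 + rE + rP) ^ 2 + p * (1 + rE) ^ 2) * (r - S_P) ^ 2

theorem equilibriumLoss_mul_one_add (p rE t r S_P : ℝ) (hrE : 1 + rE ≠ 0) :
    equilibriumLoss p rE (t * (1 + rE)) r S_P
      = t ^ 2 / ((1 - p) * (1 + t) ^ 2 + p) * (p * (1 - p) * (r - S_P) ^ 2) := by
  have hnum : p * (1 - p) * (t * (1 + rE)) ^ 2 = p * (1 - p) * t ^ 2 * (1 + rE) ^ 2 := by ring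
  have hden : (1 - p) * (1 + rE + t * (1 + rE)) ^ 2 + p * (1 + rE) ^ 2
      = ((1 - p) * (1 + t) ^ 2 + p) * (1 + rE) ^ 2 := by ring
  rw [equilibriumLoss, hnum, hden, mul_div_mul_right _ _ (pow_ne_zero 2 hrE)]
  ring

theorem equilibriumLoss_eq_of_div_eq (p r S_P : ℝ) {rE rP rE' rP' : ℝ} (hrE : 1 + rE ≠ 0)
    (hrE' : 1 + rE' ≠ 0) (h : rP / (1 + rE) = rP' / (1 + rE')) :
    equilibriumLoss p rE rP r S_P = equilibriumLoss p rE' rP' r S_P := by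
  rw [← div_mul_cancel₀ rP hrE, ← div_mul_cancel₀ rP' hrE', h,
    equilibriumLoss_mul_one_add _ _ _ _ _ hrE, equilibriumLoss_mul_one_add _ _ _ _ _ hrE']

theorem stmt_14_general (p rE t r S_P : ℝ) (hrE : 0 < rE) :
    (p * (1 - p) * (t * (1 + rE)) ^ 2 /
        ((1 - p) * (1 + rE + t * (1 + rE)) ^ 2 + p * (1 + rE) ^ 2) *
        (r - S_P) ^ 2
      = t ^ 2 / ((1 - p) * (1 + t) ^ 2 + p) * (p * (1 - p) * (r - S_P) ^ 2)) ∧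
    ∀ rE' rP' rE'' rP'' : ℝ, 0 < rE' → 0 < rP' → 0 < rE'' → 0 < rP'' →
      rP' / (1 + rE') = rP'' / (1 + rE'') →
      p * (1 - p) * rP' ^ 2 /
          ((1 - p) * (1 + rE' + rP') ^ 2 + p * (1 + rE') ^ 2) * (r - S_P) ^ 2
        = p * (1 - p) * rP'' ^ 2 /
          ((1 - p) * (1 + rE'' + rP'') ^ 2 + p * (1 + rE'') ^ 2) *
          (r - S_P) ^ 2 := by
  refine ⟨equilibriumLoss_mul_one_add p rE t r S_P (by linarith), ?_⟩
  intro rE' rP' rE'' rP'' hrE' _ hrE'' _ h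
  exact equilibriumLoss_eq_of_div_eq p r S_P (by linarith) (by linarith) h

/-- With `rP = t(1+rE)`, the equilibrium loss equals
`t²/((1-p)(1+t)²+p) · p(1-p)(r-S_P)²`; in particular it depends on `(rE,rP)`
only through the ratio `t = rP/(1+rE)`. -/
theorem stmt_14 (p rE t r S_P : ℝ) (hp : p ∈ Set.Icc (0 : ℝ) 1)
    (hrE : 0 < rE) (ht : 0 < t) :
    (p * (1 - p) * (t * (1 + rE)) ^ 2 /
        ((1 - p) * (1 + rE + t * (1 + rE)) ^ 2 + p * (1 + rE) ^ 2) *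
        (r - S_P) ^ 2
      = t ^ 2 / ((1 - p) * (1 + t) ^ 2 + p) * (p * (1 - p) * (r - S_P) ^ 2)) ∧
    ∀ rE' rP' rE'' rP'' : ℝ, 0 < rE' → 0 < rP' → 0 < rE'' → 0 < rP'' →
      rP' / (1 + rE') = rP'' / (1 + rE'') →
      p * (1 - p) * rP' ^ 2 /
          ((1 - p) * (1 + rE' + rP') ^ 2 + p * (1 + rE') ^ 2) * (r - S_P) ^ 2
        = p * (1 - p) * rP'' ^ 2 /
          ((1 - p) * (1 + rE'' + rP'') ^ 2 + p * (1 + rE'') ^ 2) *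
          (r - S_P) ^ 2 :=
  stmt_14_general p rE t r S_P hrE
end

section
/- Fix reals μ0, r, S_P, 0 < rE < r̃E, and rP > 0, and let A = 1/(1+rE)² − 1/(1+r̃E)², B = 1/(1+rE+rP)² − 1/(1+r̃E+rP)². Define the threshold c̄(p) = (1−p)·(r−μ0)²·A + p·((r−μ0) + rP·(r−S_P))²·B for p ∈ [0,1]. Then c̄ is an affine function of p, and c̄ is strictly decreasing in p if and only if |r − (μ0 + rP·S_P)/(1+rP)| < (√(A/B)/(1+rP))·|r − μ0|, where the right-hand side is well defined since A, B > 0. -/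
/-- The investment threshold `cbar(p)` is affine in `p`, and it is
strictly decreasing in `p` iff
`|r − (μ0 + rP·S_P)/(1+rP)| < (√(A/B)/(1+rP))·|r − μ0|`. -/
theorem stmt_19 (μ0 r S_P rE rE' rP : ℝ)
    (hrE : 0 < rE) (hlt : rE < rE') (hrP : 0 < rP) :
    (∃ a b : ℝ, ∀ p : ℝ,
      (1 - p) * (r - μ0) ^ 2 * (1 / (1 + rE) ^ 2 - 1 / (1 + rE') ^ 2) +
        p * ((r - μ0) + rP * (r - S_P)) ^ 2 *
          (1 / (1 + rE + rP) ^ 2 - 1 / (1 + rE' + rP) ^ 2)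
      = a * p + b) ∧
    (StrictAntiOn
      (fun p : ℝ =>
        (1 - p) * (r - μ0) ^ 2 * (1 / (1 + rE) ^ 2 - 1 / (1 + rE') ^ 2) +
          p * ((r - μ0) + rP * (r - S_P)) ^ 2 *
            (1 / (1 + rE + rP) ^ 2 - 1 / (1 + rE' + rP) ^ 2))
      (Set.Icc 0 1)
    ↔
    |r - (μ0 + rP * S_P) / (1 + rP)| <
      Real.sqrt ((1 / (1 + rE) ^ 2 - 1 / (1 + rE') ^ 2) /
          (1 / (1 + rE + rP) ^ 2 - 1 / (1 + rE' + rP) ^ 2)) / (1 + rP) *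
        |r - μ0|) := by
  set X := r - μ0 with hXdef
  set Y := (r - μ0) + rP * (r - S_P) with hYdef
  set A := 1 / (1 + rE) ^ 2 - 1 / (1 + rE') ^ 2 with hAdef
  set B := 1 / (1 + rE + rP) ^ 2 - 1 / (1 + rE' + rP) ^ 2 with hBdef
  have h1 : (0:ℝ) < 1 + rE := by linarith
  have h2 : (0:ℝ) < 1 + rE + rP := by linarith
  have hP : (0:ℝ) < 1 + rP := by linarith
  have hApos : 0 < A := by
    have hsq : (1 + rE) ^ 2 < (1 + rE') ^ 2 := by nlinarith
    have := one_div_lt_one_div_of_lt (by positivity) hsq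
    rw [hAdef]; linarith
  have hBpos : 0 < B := by
    have hsq : (1 + rE + rP) ^ 2 < (1 + rE' + rP) ^ 2 := by nlinarith
    have := one_div_lt_one_div_of_lt (by positivity) hsq
    rw [hBdef]; linarith
  have key : ∀ p : ℝ, (1 - p) * X ^ 2 * A + p * Y ^ 2 * B
      = (Y ^ 2 * B - X ^ 2 * A) * p + X ^ 2 * A := by intro p; ring
  refine ⟨⟨Y ^ 2 * B - X ^ 2 * A, X ^ 2 * A, key⟩, ?_⟩
  -- first: StrictAntiOn ↔ slope negative
  have hmono : StrictAntiOn
      (fun p : ℝ => (1 - p) * X ^ 2 * A + p * Y ^ 2 * B) (Set.Icc 0 1)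
      ↔ Y ^ 2 * B < X ^ 2 * A := by
    constructor
    · intro h
      have h01 := h (Set.left_mem_Icc.mpr zero_le_one)
        (Set.right_mem_Icc.mpr zero_le_one) zero_lt_one
      simp only at h01
      nlinarith
    · intro ha x _ y _ hxy
      simp only
      nlinarith
  rw [hmono]
  -- second: algebraic equivalence with the sqrt inequality
  have hY : r - (μ0 + rP * S_P) / (1 + rP) = Y / (1 + rP) := by
    field_simp [hYdef]; ring
  rw [hY, abs_div, abs_of_pos hP, div_mul_eq_mul_div,
    div_lt_div_iff_of_pos_right hP]
  have hsqrt : Real.sqrt (A / B) * |X| = Real.sqrt (A / B * X ^ 2) := by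
    rw [Real.sqrt_mul (by positivity), Real.sqrt_sq_eq_abs]
  rw [hsqrt, show |Y| = Real.sqrt (Y ^ 2) by rw [Real.sqrt_sq_eq_abs],
    Real.sqrt_lt_sqrt_iff (by positivity)]
  rw [div_mul_eq_mul_div, lt_div_iff₀ hBpos]
  constructor <;> intro h <;> nlinarith
end
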